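/- Let g₁, g₂ be hyperbolic isometries of a simplicial tree such that g₁g₂ is elliptic, and suppose their axes intersect along a path [p,q] of length Δ = min{l(g₁), l(g₂)} with g₁ and g₂⁻¹ translating p towards q. Then g₁g₂ fixes a vertex at distance |l(g₁) − l(g₂)|/2 from q. -/

import Mathlib

open SimpleGraph

variable {V : Type*}

/-- Translation length of a graph automorphism of `G` (min displacement over vertices). -/
noncomputable def ell (G : SimpleGraph V) (g : G ≃g G) : ℕ :=
  sInf (Set.range fun x => G.dist x (g x))

/-- The set of vertices realizing the minimal displacement (the axis, for hyperbolic `g`). -/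
def axisSet (G : SimpleGraph V) (g : G ≃g G) : Set V :=
  {x | G.dist x (g x) = ell G g}

/-- `g` acts without inversions: no edge is flipped. -/
def noInv (G : SimpleGraph V) (g : G ≃g G) : Prop :=
  ∀ x y, G.Adj x y → ¬(g x = y ∧ g y = x)

/-- The segment (geodesic) between `p` and `q` in the tree. -/
def seg (G : SimpleGraph V) (p q : V) : Set V :=
  {x | G.dist p x + G.dist x q = G.dist p q}

/-- The open segment between `p` and `q` (endpoints removed). -/
def openSeg (G : SimpleGraph V) (p q : V) : Set V :=
  {x | x ∈ seg G p q ∧ x ≠ p ∧ x ≠ q}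

/-- Distance from a vertex to a set of vertices. -/
noncomputable def distToSet (G : SimpleGraph V) (x : V) (S : Set V) : ℕ :=
  sInf (G.dist x '' S)

/-- Distance between two sets of vertices. -/
noncomputable def setDist (G : SimpleGraph V) (S T : Set V) : ℕ :=
  sInf (Set.image2 G.dist S T)

/-- The projection of `B` onto `A`: points of `A` at minimal distance from `B`. -/
noncomputable def projOn (G : SimpleGraph V) (A B : Set V) : Set V :=
  {x | x ∈ A ∧ distToSet G x B = setDist G A B}

/-- `g` translates the vertex `p` (assumed on its axis) towards the vertex `q`. -/
noncomputable def translatesToward (G : SimpleGraph V) (g : G ≃g G) (p q : V) : Prop :=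
  (G.dist (g p) q : ℤ) = |(G.dist p q : ℤ) - (ell G g : ℤ)|

/-! If `l(g₂) ≤ l(g₁)`, then `g₂` maps `q` to `p` and `g₁` moves `p` to distance
`l(g₁) - l(g₂)` from `q`; symmetrically otherwise. So `g₁ g₂` displaces `q` by
`|l(g₁) - l(g₂)|`.

An automorphism `h` of a tree with a fixed vertex fixes the midpoint of `[x, h x]` for every `x`:
if `v` is a fixed vertex nearest to `x`, the geodesics from `v` to `x` and to `h x` leave `v`
along different edges, so their concatenation is a path, hence a geodesic, of length `2 d(x, v)`.
-/

namespace SimpleGraph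

variable {V' : Type*} {G : SimpleGraph V} {G' : SimpleGraph V'}

lemma Iso.dist_map_le (φ : G ≃g G') (a b : V) : G'.dist (φ a) (φ b) ≤ G.dist a b := by
  by_cases hr : G.Reachable a b
  · obtain ⟨p, hp⟩ := hr.exists_walk_length_eq_dist
    simpa [hp] using dist_le (p.map φ.toHom)
  · simp [dist_eq_zero_of_not_reachable (Iso.reachable_iff.not.mpr hr)]

lemma Iso.dist_map (φ : G ≃g G') (a b : V) : G'.dist (φ a) (φ b) = G.dist a b :=
  le_antisymm (φ.dist_map_le a b) (by simpa using φ.symm.dist_map_le (φ a) (φ b))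

lemma IsAcyclic.length_eq_dist_of_isPath (hG : G.IsAcyclic) {u v : V} {p : G.Walk u v}
    (hp : p.IsPath) : p.length = G.dist u v := by
  obtain ⟨r, hr, hrl⟩ := p.reachable.exists_path_of_dist
  have : p = r := congrArg Subtype.val ((hG.subsingleton_path u v).elim ⟨p, hp⟩ ⟨r, hr⟩)
  rw [this, hrl]

lemma IsAcyclic.isPath_append (hG : G.IsAcyclic) {u v w : V} {p : G.Walk u v} {q : G.Walk v w}
    (hp : p.IsPath) (hq : q.IsPath) (hpq : p.penultimate ≠ q.snd) : (p.append q).IsPath := by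
  induction q generalizing u with
  | nil => simpa using hp
  | @cons v b w hadj q ih =>
    rw [Walk.cons_isPath_iff] at hq
    have hb : b ∉ p.support := fun hb ↦
      hpq (by simpa using (hG.eq_penultimate_of_adj_end hp hadj hb).symm)
    rw [← Walk.concat_append]
    refine ih (hp.concat hb hadj) hq.1 ?_
    rw [Walk.penultimate_concat]
    exact fun h ↦ hq.2 (h ▸ q.getVert_mem_support 1)

theorem IsTree.exists_apply_eq_self_two_mul_dist_eq (hT : G.IsTree) (h : G ≃g G) {w : V}
    (hw : h w = w) (x : V) : ∃ v, h v = v ∧ 2 * G.dist x v = G.dist x (h x) := by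
  obtain ⟨v, hv, hmin⟩ :=
    exists_minimalFor_of_wellFoundedLT (fun u ↦ h u = u) (G.dist x) ⟨w, hw⟩
  refine ⟨v, hv, ?_⟩
  obtain ⟨p, hp, hpl⟩ := hT.connected.exists_path_of_dist v x
  by_cases hnil : p.Nil
  · obtain rfl := hnil.eq
    simp [hv]
  have hsnd : h p.snd ≠ p.snd := by
    intro hfix
    have hlt : G.dist x p.snd < G.dist x v := by
      rw [dist_comm, dist_comm (u := x), ← hpl, ← p.length_tail_add_one hnil]
      exact Nat.lt_succ_of_le (dist_le p.tail)
    exact (hmin hfix hlt.le).not_gt hlt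
  let q : G.Walk v (h x) := (p.map h.toHom).copy hv rfl
  have hq : q.IsPath := by simpa [q] using hp.map h.injective
  have hqsnd : q.snd = h p.snd := by simp [q, Walk.snd, Walk.getVert_map]
  have hpq := hT.isAcyclic.isPath_append hp.reverse hq
    (by rw [Walk.penultimate_reverse, hqsnd]; exact hsnd.symm)
  have := hT.isAcyclic.length_eq_dist_of_isPath hpq
  simp only [Walk.length_append, Walk.length_reverse, q, Walk.length_copy, Walk.length_map] at this
  rw [← this, hpl, dist_comm]
  ring

end SimpleGraph

lemma ell_inv (G : SimpleGraph V) (g : G ≃g G) : ell G g⁻¹ = ell G g := by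
  have hdisp : (fun x ↦ G.dist x (g⁻¹ x)) = (fun x ↦ G.dist x (g x)) ∘ ⇑(g⁻¹) := by
    funext x
    simp [SimpleGraph.dist_comm]
  rw [ell, ell, hdisp, (g⁻¹).surjective.range_comp]

lemma exists_apply_eq_self_of_ell_eq_zero {G : SimpleGraph V} (hc : G.Connected) (g : G ≃g G)
    (h0 : ell G g = 0) : ∃ x, g x = x := by
  have := hc.nonempty
  obtain ⟨x, hx⟩ : 0 ∈ Set.range fun x ↦ G.dist x (g x) :=
    h0 ▸ Nat.sInf_mem (Set.range_nonempty _)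
  exact ⟨x, (hc.dist_eq_zero_iff.mp hx).symm⟩

lemma dist_mul_apply_eq_abs_sub {G : SimpleGraph V} (hc : G.Connected) {g₁ g₂ : G ≃g G}
    {p q : V}
    (hΔ : G.dist p q = min (ell G g₁) (ell G g₂))
    (hd₁ : translatesToward G g₁ p q) (hd₂ : translatesToward G g₂⁻¹ p q) :
    (G.dist q ((g₁ * g₂) q) : ℤ) = |(ell G g₁ : ℤ) - ell G g₂| := by
  unfold translatesToward at hd₁ hd₂
  rw [ell_inv, hΔ] at hd₂
  rw [hΔ] at hd₁
  rcases le_total (ell G g₂) (ell G g₁) with hle | hle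
  · rw [min_eq_right hle, sub_self, abs_zero, Nat.cast_eq_zero, hc.dist_eq_zero_iff] at hd₂
    have hg₂ : g₂ q = p := by rw [← hd₂, RelIso.apply_inv_self]
    rw [RelIso.mul_apply, hg₂, dist_comm, hd₁, min_eq_right hle, abs_sub_comm]
  · rw [min_eq_left hle, sub_self, abs_zero, Nat.cast_eq_zero, hc.dist_eq_zero_iff] at hd₁
    rw [min_eq_left hle] at hd₂
    calc (G.dist q ((g₁ * g₂) q) : ℤ) = G.dist (g₁ p) (g₁ (g₂ q)) := by rw [hd₁]; rfl
      _ = G.dist (g₂⁻¹ p) (g₂⁻¹ (g₂ q)) := by rw [Iso.dist_map, Iso.dist_map]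
      _ = |(ell G g₁ : ℤ) - ell G g₂| := by rw [RelIso.inv_apply_self, hd₂]

theorem stmt10_general (G : SimpleGraph V) (hT : G.IsTree) (g₁ g₂ : G ≃g G)
    (hell : ell G (g₁ * g₂) = 0)
    (p q : V)
    (hΔ : G.dist p q = min (ell G g₁) (ell G g₂))
    (hd₁ : translatesToward G g₁ p q) (hd₂ : translatesToward G g₂⁻¹ p q) :
    ∃ v : V, (g₁ * g₂) v = v ∧
      2 * (G.dist q v : ℤ) = |(ell G g₁ : ℤ) - (ell G g₂ : ℤ)| := by
  obtain ⟨w, hw⟩ := exists_apply_eq_self_of_ell_eq_zero hT.connected _ hell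
  obtain ⟨v, hv, hqv⟩ := hT.exists_apply_eq_self_two_mul_dist_eq _ hw q
  refine ⟨v, hv, ?_⟩
  rw [← dist_mul_apply_eq_abs_sub hT.connected hΔ hd₁ hd₂, ← hqv]
  push_cast
  ring

/-- If the product is elliptic and the axes intersect along a segment of length exactly
the minimum of the translation lengths, then the product fixes a vertex at distance
half the absolute difference of the lengths from the endpoint q. -/
theorem stmt10 (G : SimpleGraph V) (hT : G.IsTree) (g₁ g₂ : G ≃g G)
    (h₁ : noInv G g₁) (h₂ : noInv G g₂)
    (hyp₁ : 0 < ell G g₁) (hyp₂ : 0 < ell G g₂)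
    (hell : ell G (g₁ * g₂) = 0)
    (p q : V)
    (hseg : axisSet G g₁ ∩ axisSet G g₂ = seg G p q)
    (hΔ : G.dist p q = min (ell G g₁) (ell G g₂))
    (hd₁ : translatesToward G g₁ p q) (hd₂ : translatesToward G g₂⁻¹ p q) :
    ∃ v : V, (g₁ * g₂) v = v ∧
      2 * (G.dist q v : ℤ) = |(ell G g₁ : ℤ) - (ell G g₂ : ℤ)| :=
  stmt10_general G hT g₁ g₂ hell p q hΔ hd₁ hd₂
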